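/- arXiv:1506.06671 — 2 statements merged into one kernel-verified Lean document; each statement's English description precedes it below -/
import Mathlib

section
/- Assume G has at least one edge and 0 ≤ p ≤ 1. The polynomials D_2(t) = Σ_{wedges {e,f}} t_e·t_f and T_2(t) = Σ_{triangles {e,f,g}} (t_e·t_f + t_f·t_g + t_g·t_e) in the variables (t_e)_{e∈E} are each totally positive; moreover, when the variables are evaluated at independent Bernoulli(p) random variables, E_{≥1}[D_2] ≤ max{p·β, 1} and E_{≥1}[T_2] ≤ max{2p·Δ, 1}. -/
open Finset MvPolynomial

noncomputable section
open scoped Classical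

namespace ThreeProfile

variable {V : Type*}

/-- Edges of an edge set `F` whose endpoints both lie in the vertex set `s`. -/
def edgesIn (F : Finset (Sym2 V)) (s : Finset V) : Finset (Sym2 V) :=
  F.filter (fun e => ∀ x ∈ e, x ∈ s)

/-- All 3-element subsets of the vertex set. -/
def triples (V : Type*) [Fintype V] : Finset (Finset V) :=
  (Finset.univ : Finset V).powersetCard 3

/-- 3-subsets of `V` inducing exactly `i` edges of `G`. -/
def triplesWith [Fintype V] (G : SimpleGraph V) (i : ℕ) : Finset (Finset V) :=
  (triples V).filter (fun s => (edgesIn G.edgeFinset s).card = i)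

/-- A polynomial (in variables indexed by `Sym2 V`) is totally positive if all of its
monomial coefficients are nonnegative. -/
def TotallyPositive (f : MvPolynomial (Sym2 V) ℝ) : Prop :=
  ∀ m : Sym2 V →₀ ℕ, 0 ≤ f.coeff m

/-- Iterated partial derivative `∂^a f` for a multi-index `a`. -/
def iterDeriv (a : Sym2 V →₀ ℕ) (f : MvPolynomial (Sym2 V) ℝ) :
    MvPolynomial (Sym2 V) ℝ :=
  a.support.toList.foldr (fun i g => (fun h => MvPolynomial.pderiv i h)^[a i] g) f

/-- Expectation of a polynomial when the variables are evaluated at independent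
Bernoulli(`q`) random variables. -/
def bernoulliExp [Fintype V] (q : ℝ) (f : MvPolynomial (Sym2 V) ℝ) : ℝ :=
  ∑ S ∈ (Finset.univ : Finset (Sym2 V)).powerset,
    q ^ S.card * (1 - q) ^ (Fintype.card (Sym2 V) - S.card) *
      MvPolynomial.eval (fun e => if e ∈ S then (1 : ℝ) else 0) f

/-- Number of 3-subsets inducing in `G` exactly two edges, one of which is `e`. -/
def betaE [Fintype V] (G : SimpleGraph V) (e : Sym2 V) : ℕ :=
  ((triples V).filter
    (fun s => (edgesIn G.edgeFinset s).card = 2 ∧ e ∈ edgesIn G.edgeFinset s)).card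

/-- Number of triangles of `G` containing the edge `e`. -/
def deltaE [Fintype V] (G : SimpleGraph V) (e : Sym2 V) : ℕ :=
  ((triples V).filter
    (fun s => (edgesIn G.edgeFinset s).card = 3 ∧ e ∈ edgesIn G.edgeFinset s)).card

/-- The polynomial `D₂(t) = Σ_{wedges {e,f}} t_e t_f`. -/
def D2poly [Fintype V] (G : SimpleGraph V) : MvPolynomial (Sym2 V) ℝ :=
  ∑ s ∈ triplesWith G 2, ∏ e ∈ edgesIn G.edgeFinset s, X e

/-- The polynomial `T₂(t) = Σ_{triangles {e,f,g}} (t_e t_f + t_f t_g + t_g t_e)`. -/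
def T2poly [Fintype V] (G : SimpleGraph V) : MvPolynomial (Sym2 V) ℝ :=
  ∑ s ∈ triplesWith G 3, ∑ pr ∈ (edgesIn G.edgeFinset s).powersetCard 2, ∏ e ∈ pr, X e

end ThreeProfile

/-!
Both polynomials are sums `∑ i ∈ I, ∏ e ∈ P i, t_e` of squarefree quadratic monomials, with
`P` injective on `I` because two distinct edges lie in at most one 3-set. For such a sum, `∂^a`
kills the monomial `i` unless `a` is the indicator of a subset of `P i`, and the Bernoulli
expectation of `∏ e ∈ Q, t_e` is `q ^ #Q`. Hence a first derivative `∂_e` has expectation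
`q * #{i | e ∈ P i}`, a second derivative has expectation `#{i | P i = supp a} ≤ 1`, and higher
derivatives vanish. The counts `#{i | e ∈ P i}` are `β_e` for `D₂` and `2 Δ_e` for `T₂`,
since an edge of a triangle lies in two of its three pairs of edges.
-/

namespace MvPolynomial

variable {σ R : Type*} [CommSemiring R]

lemma pderiv_prod_X_of_notMem {j : σ} {P : Finset σ} (hj : j ∉ P) :
    pderiv j (∏ e ∈ P, X e : MvPolynomial σ R) = 0 := by
  induction P using Finset.induction with
  | empty => simp
  | insert x P hx ih =>
    rw [Finset.mem_insert, not_or] at hj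
    rw [prod_insert hx, pderiv_mul, pderiv_X_of_ne (Ne.symm hj.1), ih hj.2]
    simp

variable [DecidableEq σ]

lemma pderiv_prod_X {j : σ} {P : Finset σ} (hj : j ∈ P) :
    pderiv j (∏ e ∈ P, X e : MvPolynomial σ R) = ∏ e ∈ P.erase j, X e := by
  rw [← mul_prod_erase P X hj, pderiv_mul, pderiv_X_self,
    pderiv_prod_X_of_notMem (notMem_erase j P)]
  simp

lemma iterate_pderiv_prod_X {j : σ} {P : Finset σ} {k : ℕ} (hk : k ≠ 0) :
    (pderiv j)^[k] (∏ e ∈ P, X e : MvPolynomial σ R) =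
      if k = 1 ∧ j ∈ P then ∏ e ∈ P.erase j, X e else 0 := by
  obtain ⟨k, rfl⟩ := Nat.exists_eq_add_one_of_ne_zero hk
  rw [Function.iterate_succ_apply]
  by_cases hj : j ∈ P
  · rw [pderiv_prod_X hj]
    rcases k with _ | k
    · simp [hj]
    · rw [Function.iterate_succ_apply, pderiv_prod_X_of_notMem (notMem_erase j P),
        iterate_map_zero]
      simp
  · rw [pderiv_prod_X_of_notMem hj, iterate_map_zero]
    simp [hj]

lemma foldr_iterate_pderiv_prod_X (a : σ →₀ ℕ) (P : Finset σ) {l : List σ} (hl : l.Nodup)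
    (ha : ∀ i ∈ l, a i ≠ 0) :
    l.foldr (fun i g => (fun h => pderiv i h)^[a i] g) (∏ e ∈ P, X e : MvPolynomial σ R) =
      if ∀ i ∈ l, a i = 1 ∧ i ∈ P then ∏ e ∈ P \ l.toFinset, X e else 0 := by
  induction l with
  | nil => simp
  | cons i l ih =>
    rw [List.nodup_cons] at hl
    rw [List.foldr_cons, ih hl.2 fun k hk => ha k (List.mem_cons_of_mem i hk)]
    by_cases hl' : ∀ k ∈ l, a k = 1 ∧ k ∈ P
    · have hiP : i ∈ P \ l.toFinset ↔ i ∈ P := by simp [hl.1]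
      rw [if_pos hl', iterate_pderiv_prod_X (ha i List.mem_cons_self), List.toFinset_cons,
        sdiff_insert]
      simp only [hiP, List.forall_mem_cons, eq_true hl', and_true]
    · rw [if_neg hl', iterate_map_zero, if_neg (fun h => hl' fun k hk => h k (by simp [hk]))]

end MvPolynomial

lemma Finset.card_filter_mem_powersetCard {α : Type*} [DecidableEq α] (E : Finset α) (j : α)
    {k : ℕ} (hk : 1 ≤ k) :
    #{t ∈ E.powersetCard k | j ∈ t} = if j ∈ E then (#E - 1).choose (k - 1) else 0 := by
  split_ifs with hj
  · simpa using card_filter_powersetCard_subset {j} E k (singleton_subset_iff.2 hj) (by simpa)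
  · rw [card_eq_zero, filter_eq_empty_iff]
    exact fun t ht hjt => hj ((mem_powersetCard.1 ht).1 hjt)

lemma Finset.le_sup_of_forall_notMem_eq_bot {α β : Type*} [SemilatticeSup β] [OrderBot β]
    {s : Finset α} {f : α → β} (hf : ∀ j ∉ s, f j = ⊥) (j : α) : f j ≤ s.sup f := by
  by_cases hj : j ∈ s
  · exact le_sup hj
  · simp [hf j hj]

lemma Sym2.eq_of_not_isDiag_of_card_le_two {V : Type*} {A : Finset V} (hA : #A ≤ 2)
    {x y : Sym2 V} (hx : ¬x.IsDiag) (hy : ¬y.IsDiag) (hxA : ∀ v ∈ x, v ∈ A)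
    (hyA : ∀ v ∈ y, v ∈ A) : x = y := by
  have htoFinset : ∀ z : Sym2 V, ¬z.IsDiag → (∀ v ∈ z, v ∈ A) → z.toFinset = A :=
    fun z hz hzA => eq_of_subset_of_card_le (fun v hv => hzA v (Sym2.mem_toFinset.1 hv))
      (by rw [Sym2.card_toFinset_of_not_isDiag z hz]; exact hA)
  ext v
  rw [← Sym2.mem_toFinset, ← Sym2.mem_toFinset, htoFinset x hx hxA, htoFinset y hy hyA]

namespace ThreeProfile

variable {V : Type*}

section Expectation

lemma iterDeriv_sum {ι : Type*} (a : Sym2 V →₀ ℕ) (I : Finset ι)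
    (f : ι → MvPolynomial (Sym2 V) ℝ) :
    iterDeriv a (∑ i ∈ I, f i) = ∑ i ∈ I, iterDeriv a (f i) := by
  have hlin : ∀ (l : List (Sym2 V)) (g : MvPolynomial (Sym2 V) ℝ),
      l.foldr (fun i g => (fun h => pderiv i h)^[a i] g) g =
        (l.map fun i => (pderiv i).toLinearMap ^ a i).prod g := by
    intro l g
    induction l with
    | nil => rfl
    | cons i l ih => simp [ih, Module.End.mul_apply, Module.End.pow_apply]
  simp only [iterDeriv, hlin, map_sum]

lemma iterDeriv_prod_X (a : Sym2 V →₀ ℕ) (P : Finset (Sym2 V)) :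
    iterDeriv a (∏ e ∈ P, X e) =
      if ∀ i ∈ a.support, a i = 1 ∧ i ∈ P then ∏ e ∈ P \ a.support, X e else 0 := by
  rw [iterDeriv, foldr_iterate_pderiv_prod_X a P (nodup_toList _)
    (fun i hi => Finsupp.mem_support_iff.1 (mem_toList.1 hi))]
  simp only [mem_toList, toList_toFinset]

variable [Fintype V]

lemma bernoulliExp_sum {ι : Type*} (q : ℝ) (I : Finset ι)
    (f : ι → MvPolynomial (Sym2 V) ℝ) :
    bernoulliExp q (∑ i ∈ I, f i) = ∑ i ∈ I, bernoulliExp q (f i) := by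
  simp only [bernoulliExp, map_sum, mul_sum]
  exact sum_comm

lemma bernoulliExp_zero (q : ℝ) : bernoulliExp q (0 : MvPolynomial (Sym2 V) ℝ) = 0 := by
  simp [bernoulliExp]

lemma bernoulliExp_prod_X (q : ℝ) (P : Finset (Sym2 V)) :
    bernoulliExp q (∏ e ∈ P, X e) = q ^ #P := by
  -- Expanding `∏ e, (q + g e)` over subsets `S` gives the Bernoulli weights of `S`, except that
  -- `g` vanishes on `P` and so kills every `S` not containing `P`.
  set g : Sym2 V → ℝ := fun e => if e ∈ P then 0 else 1 - q
  have hterm : ∀ S ∈ (univ : Finset (Sym2 V)).powerset,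
      q ^ #S * (1 - q) ^ (Fintype.card (Sym2 V) - #S) *
        eval (fun e => if e ∈ S then (1 : ℝ) else 0) (∏ e ∈ P, X e) =
      (∏ _e ∈ S, q) * ∏ e ∈ univ \ S, g e := by
    intro S _
    simp only [eval_prod, eval_X, prod_boole, prod_const]
    by_cases hPS : ∀ e ∈ P, e ∈ S
    · rw [if_pos hPS, mul_one, prod_congr rfl fun e he => if_neg fun heP =>
        (mem_sdiff.1 he).2 (hPS e heP), prod_const, card_univ_sdiff]
    · obtain ⟨e, heP, heS⟩ := not_forall₂.1 hPS
      rw [if_neg hPS, mul_zero,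
        Finset.prod_eq_zero (f := g) (mem_sdiff.2 ⟨mem_univ e, heS⟩) (if_pos heP), mul_zero]
  calc bernoulliExp q (∏ e ∈ P, X e)
      = ∑ S ∈ (univ : Finset (Sym2 V)).powerset, (∏ _e ∈ S, q) * ∏ e ∈ univ \ S, g e :=
        sum_congr rfl hterm
    _ = ∏ e, (q + g e) := (prod_add _ _ _).symm
    _ = ∏ e, if e ∈ P then q else 1 := prod_congr rfl fun e _ => by
        simp only [g]; split_ifs <;> ring
    _ = q ^ #P := by rw [Fintype.prod_ite_mem, prod_const]

end Expectation

section QuadraticForms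

variable {ι : Type*}

lemma totallyPositive_sum_prod_X (I : Finset ι) (P : ι → Finset (Sym2 V)) :
    TotallyPositive (∑ i ∈ I, ∏ e ∈ P i, X e : MvPolynomial (Sym2 V) ℝ) := fun m => by
  rw [coeff_sum]
  refine sum_nonneg fun i _ => ?_
  simp only [X, ← monomial_sum_one, coeff_monomial]
  positivity

variable [Fintype V]

lemma bernoulliExp_iterDeriv_sum_prod_X (q : ℝ) (a : Sym2 V →₀ ℕ) (I : Finset ι)
    (P : ι → Finset (Sym2 V)) :
    bernoulliExp q (iterDeriv a (∑ i ∈ I, ∏ e ∈ P i, X e)) =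
      ∑ i ∈ I, if ∀ e ∈ a.support, a e = 1 ∧ e ∈ P i
        then q ^ (#(P i) - #a.support) else 0 := by
  rw [iterDeriv_sum, bernoulliExp_sum]
  refine sum_congr rfl fun i _ => ?_
  rw [iterDeriv_prod_X]
  split_ifs with h
  · rw [bernoulliExp_prod_X, card_sdiff_of_subset fun e he => (h e he).2]
  · exact bernoulliExp_zero q

lemma bernoulliExp_iterDeriv_sum_prod_X_le {I : Finset ι} {P : ι → Finset (Sym2 V)}
    (hcard : ∀ i ∈ I, #(P i) = 2) (hinj : Set.InjOn P I) {q : ℝ} (hq : 0 ≤ q) {M : ℕ}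
    (hM : ∀ j, #{i ∈ I | j ∈ P i} ≤ M) {a : Sym2 V →₀ ℕ} (ha : a ≠ 0) :
    bernoulliExp q (iterDeriv a (∑ i ∈ I, ∏ e ∈ P i, X e)) ≤ max (q * M) 1 := by
  rw [bernoulliExp_iterDeriv_sum_prod_X]
  obtain hone | htwo : #a.support = 1 ∨ 2 ≤ #a.support := by
    have := card_pos.2 (Finsupp.support_nonempty_iff.2 ha)
    omega
  · obtain ⟨j, hj⟩ := card_eq_one.1 hone
    calc _ ≤ ∑ i ∈ I, if j ∈ P i then q else 0 := sum_le_sum fun i hi => by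
            rw [hone, hcard i hi, hj]
            split_ifs <;> simp_all
      _ = #{i ∈ I | j ∈ P i} * q := by rw [← sum_filter, sum_const, nsmul_eq_mul]
      _ ≤ M * q := by gcongr; exact_mod_cast hM j
      _ ≤ max (q * M) 1 := by rw [mul_comm]; exact le_max_left _ _
  · calc _ ≤ ∑ i ∈ I, if P i = a.support then (1 : ℝ) else 0 := sum_le_sum fun i hi => by
            split_ifs with hsub hP hP
            · rw [hP, Nat.sub_self, pow_zero]
            · exact absurd (eq_of_subset_of_card_le (fun e he => (hsub e he).2)
                (hcard i hi ▸ htwo)).symm hP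
            · exact zero_le_one
            · exact le_rfl
      _ = #{i ∈ I | P i = a.support} := by rw [sum_boole]
      _ ≤ 1 := by
        norm_cast
        refine card_le_one.2 fun i hi k hk => ?_
        rw [mem_filter] at hi hk
        exact hinj hi.1 hk.1 (hi.2.trans hk.2.symm)
      _ ≤ max (q * M) 1 := le_max_right _ _

end QuadraticForms

section Graph

variable [Fintype V] (G : SimpleGraph V)

lemma mem_triplesWith {k : ℕ} {s : Finset V} :
    s ∈ triplesWith G k ↔ #s = 3 ∧ #(edgesIn G.edgeFinset s) = k := by
  simp [triplesWith, triples, mem_powersetCard]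

lemma mem_edgesIn {e : Sym2 V} {s : Finset V} :
    e ∈ edgesIn G.edgeFinset s ↔ e ∈ G.edgeFinset ∧ ∀ v ∈ e, v ∈ s := by
  simp [edgesIn]

lemma eq_of_subset_edgesIn {s₁ s₂ : Finset V} (h₁ : #s₁ = 3) (h₂ : #s₂ = 3)
    {T : Finset (Sym2 V)} (hT : #T = 2) (hT₁ : T ⊆ edgesIn G.edgeFinset s₁)
    (hT₂ : T ⊆ edgesIn G.edgeFinset s₂) : s₁ = s₂ := by
  obtain ⟨x, y, hxy, rfl⟩ := card_eq_two.1 hT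
  have hedge : ∀ z ∈ ({x, y} : Finset (Sym2 V)),
      ¬z.IsDiag ∧ ∀ v ∈ z, v ∈ s₁ ∩ s₂ := by
    intro z hz
    obtain ⟨hzG, hz₁⟩ := (mem_edgesIn G).1 (hT₁ hz)
    exact ⟨G.not_isDiag_of_mem_edgeSet (SimpleGraph.mem_edgeFinset.1 hzG),
      fun v hv => mem_inter.2 ⟨hz₁ v hv, ((mem_edgesIn G).1 (hT₂ hz)).2 v hv⟩⟩
  obtain ⟨hx, hx'⟩ := hedge x (by simp)
  obtain ⟨hy, hy'⟩ := hedge y (by simp)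
  have hinter : 3 ≤ #(s₁ ∩ s₂) := by
    by_contra hlt
    exact hxy (Sym2.eq_of_not_isDiag_of_card_le_two (by omega) hx hy hx' hy')
  calc s₁ = s₁ ∩ s₂ := (eq_of_subset_of_card_le inter_subset_left (by omega)).symm
    _ = s₂ := eq_of_subset_of_card_le inter_subset_right (by omega)

lemma injOn_edgesIn_triplesWith_two :
    Set.InjOn (edgesIn G.edgeFinset) (triplesWith G 2) := by
  intro s₁ h₁ s₂ h₂ heq
  rw [mem_coe, mem_triplesWith] at h₁ h₂
  exact eq_of_subset_edgesIn G h₁.1 h₂.1 h₁.2 subset_rfl heq.le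

abbrev trianglePairs : Finset (Σ _ : Finset V, Finset (Sym2 V)) :=
  (triplesWith G 3).sigma fun s => (edgesIn G.edgeFinset s).powersetCard 2

lemma T2poly_eq_sum_trianglePairs :
    T2poly G = ∑ x ∈ trianglePairs G, ∏ e ∈ x.2, X e := by
  rw [T2poly, sum_sigma]

lemma injOn_snd_trianglePairs :
    Set.InjOn Sigma.snd (trianglePairs G : Set (Σ _ : Finset V, Finset (Sym2 V))) := by
  rintro ⟨s₁, T⟩ h₁ ⟨s₂, T'⟩ h₂ (rfl : T = T')
  simp only [mem_coe, mem_sigma, mem_triplesWith, mem_powersetCard] at h₁ h₂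
  obtain rfl := eq_of_subset_edgesIn G h₁.1.1 h₂.1.1 h₁.2.2 h₁.2.1 h₂.2.1
  rfl

lemma betaE_eq_card (j : Sym2 V) :
    betaE G j = #{s ∈ triplesWith G 2 | j ∈ edgesIn G.edgeFinset s} := by
  simp only [betaE, triplesWith, filter_filter]

lemma deltaE_eq_card (j : Sym2 V) :
    deltaE G j = #{s ∈ triplesWith G 3 | j ∈ edgesIn G.edgeFinset s} := by
  simp only [deltaE, triplesWith, filter_filter]

lemma card_filter_mem_edgesIn_eq_zero (S : Finset (Finset V)) {j : Sym2 V}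
    (hj : j ∉ G.edgeFinset) : #{s ∈ S | j ∈ edgesIn G.edgeFinset s} = 0 := by
  simp [edgesIn, hj]

lemma card_filter_mem_trianglePairs (j : Sym2 V) :
    #{x ∈ trianglePairs G | j ∈ x.2} = 2 * deltaE G j := by
  rw [card_filter, sum_sigma, deltaE_eq_card, card_filter, mul_sum]
  refine sum_congr rfl fun s hs => ?_
  dsimp only
  rw [← card_filter, card_filter_mem_powersetCard _ j one_le_two, ((mem_triplesWith G).1 hs).2]
  split_ifs <;> rfl

lemma card_filter_mem_edgesIn_le_sup_betaE (j : Sym2 V) :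
    #{s ∈ triplesWith G 2 | j ∈ edgesIn G.edgeFinset s} ≤ G.edgeFinset.sup (betaE G) := by
  rw [← betaE_eq_card]
  exact le_sup_of_forall_notMem_eq_bot (fun e he =>
    (betaE_eq_card G e).trans (card_filter_mem_edgesIn_eq_zero G _ he)) j

lemma card_filter_mem_trianglePairs_le (j : Sym2 V) :
    #{x ∈ trianglePairs G | j ∈ x.2} ≤ 2 * G.edgeFinset.sup (deltaE G) := by
  rw [card_filter_mem_trianglePairs]
  exact Nat.mul_le_mul_left 2 (le_sup_of_forall_notMem_eq_bot (fun e he =>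
    (deltaE_eq_card G e).trans (card_filter_mem_edgesIn_eq_zero G _ he)) j)

end Graph

theorem D2_T2_totally_positive_and_bounded_general {V : Type*} [Fintype V] (G : SimpleGraph V)
    (p : ℝ) (hp0 : 0 ≤ p)
    (β Δ : ℕ)
    (hβ : β = G.edgeFinset.sup (betaE G))
    (hΔ : Δ = G.edgeFinset.sup (deltaE G)) :
    TotallyPositive (D2poly G) ∧ TotallyPositive (T2poly G) ∧
    (∀ a : Sym2 V →₀ ℕ, 1 ≤ ∑ e, a e →
      bernoulliExp p (iterDeriv a (D2poly G)) ≤ max (p * (β : ℝ)) 1) ∧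
    (∀ a : Sym2 V →₀ ℕ, 1 ≤ ∑ e, a e →
      bernoulliExp p (iterDeriv a (T2poly G)) ≤ max (2 * p * (Δ : ℝ)) 1) := by
  subst hβ hΔ
  have hne : ∀ a : Sym2 V →₀ ℕ, 1 ≤ ∑ e, a e → a ≠ 0 := by
    rintro a ha rfl
    simp at ha
  rw [T2poly_eq_sum_trianglePairs]
  refine ⟨totallyPositive_sum_prod_X _ _, totallyPositive_sum_prod_X _ _,
    fun a ha => ?_, fun a ha => ?_⟩
  · exact bernoulliExp_iterDeriv_sum_prod_X_le (fun s hs => ((mem_triplesWith G).1 hs).2)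
      (injOn_edgesIn_triplesWith_two G) hp0 (card_filter_mem_edgesIn_le_sup_betaE G) (hne a ha)
  · have := bernoulliExp_iterDeriv_sum_prod_X_le (I := trianglePairs G)
      (fun x hx => (mem_powersetCard.1 (mem_sigma.1 hx).2).2) (injOn_snd_trianglePairs G) hp0
      (card_filter_mem_trianglePairs_le G) (hne a ha)
    rwa [Nat.cast_mul, Nat.cast_ofNat, mul_left_comm, ← mul_assoc] at this

theorem D2_T2_totally_positive_and_bounded {V : Type*} [Fintype V] (G : SimpleGraph V)
    (hG : G.edgeFinset.Nonempty) (p : ℝ) (hp0 : 0 ≤ p) (hp1 : p ≤ 1)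
    (β Δ : ℕ)
    (hβ : β = G.edgeFinset.sup (betaE G))
    (hΔ : Δ = G.edgeFinset.sup (deltaE G)) :
    TotallyPositive (D2poly G) ∧ TotallyPositive (T2poly G) ∧
    (∀ a : Sym2 V →₀ ℕ, 1 ≤ ∑ e, a e →
      bernoulliExp p (iterDeriv a (D2poly G)) ≤ max (p * (β : ℝ)) 1) ∧
    (∀ a : Sym2 V →₀ ℕ, 1 ≤ ∑ e, a e →
      bernoulliExp p (iterDeriv a (T2poly G)) ≤ max (2 * p * (Δ : ℝ)) 1) :=
  D2_T2_totally_positive_and_bounded_general G p hp0 β Δ hβ hΔ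

end ThreeProfile
end
end

section
/- Let 0 < p ≤ 1, ε ≥ 0, and F ⊆ E. Suppose each of the seven quantities Y_0(F), S_1(F), D_1(F), T_1(F), D_2(F), T_2(F), Y_3(F) differs from its expectation (under independent Bernoulli(p) edge sampling) by at most ε times that expectation. Then |X_0(F) − n_0| ≤ ε·(n_0 + 2n_1 + 4n_2 + 8n_3); in particular |X_0(F) − n_0| ≤ 8ε·(n_0 + n_1 + n_2 + n_3). -/
/-!
Each count involved is a sum over 3-subsets `s` of a function of two numbers: the number `k` of
edges of `G` inside `s` and the number `j ≤ k` of those lying in `F` (`tripleSum`). Under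
Bernoulli(p) sampling `j` is binomial with parameters `k` and `p`, so every expectation is a
combination of `n_0, …, n_3`. Comparing such sums triple by triple gives
`Y_2 = D_2 + T_2 - 3 Y_3` and `Y_1 = S_1 + D_1 + T_1 - 2 (D_2 + T_2) + 3 Y_3`, hence
`X_0 = Y_0 - (1/p - 1) (S_1 + D_1 + T_1) + (1/p² - 1) (D_2 + T_2) - (1/p³ - 1) Y_3`,
whose expectation is `n_0`. The triangle inequality bounds `|X_0 - n_0|` by `ε` times the same
combination of expectations with the coefficients replaced by their absolute values, which is
`ε (n_0 + 2 (1 - p) n_1 + 4 (1 - p) n_2 + (8 - 6p - 2p³) n_3)`.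
-/

open Finset

noncomputable section
open scoped Classical

namespace ThreeProfile

variable {V : Type*}

/-- Number of 3-subsets of `V` inducing exactly `i` edges from `F`. -/
def Ycount [Fintype V] (F : Finset (Sym2 V)) (i : ℕ) : ℕ :=
  ((triples V).filter (fun s => (edgesIn F s).card = i)).card

/-- Expectation over the random subgraph keeping each edge independently w.p. `p`. -/
def expVal [Fintype V] (G : SimpleGraph V) (p : ℝ) (f : Finset (Sym2 V) → ℝ) : ℝ :=
  ∑ F ∈ G.edgeFinset.powerset,
    p ^ F.card * (1 - p) ^ (G.edgeFinset.card - F.card) * f F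

/-- `S₁(F)`: 3-subsets inducing in `G` exactly one edge `e`, with `e ∈ F`. -/
def S1count [Fintype V] (G : SimpleGraph V) (F : Finset (Sym2 V)) : ℕ :=
  ((triples V).filter (fun s => ∃ e ∈ F, edgesIn G.edgeFinset s = {e})).card

/-- `D₁(F)`: pairs `(W, e)` with `W` a 3-subset inducing exactly two edges in `G`
and `e` one of them with `e ∈ F`. -/
def D1count [Fintype V] (G : SimpleGraph V) (F : Finset (Sym2 V)) : ℕ :=
  ∑ s ∈ (triples V).filter (fun s => (edgesIn G.edgeFinset s).card = 2),
    (edgesIn G.edgeFinset s ∩ F).card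

/-- `D₂(F)`: 3-subsets inducing exactly two edges in `G`, both in `F`. -/
def D2count [Fintype V] (G : SimpleGraph V) (F : Finset (Sym2 V)) : ℕ :=
  ((triples V).filter
    (fun s => (edgesIn G.edgeFinset s).card = 2 ∧ edgesIn G.edgeFinset s ⊆ F)).card

/-- `T₁(F)`: pairs `(T, e)` with `T` a triangle of `G` and `e` an edge of `T` with `e ∈ F`. -/
def T1count [Fintype V] (G : SimpleGraph V) (F : Finset (Sym2 V)) : ℕ :=
  ∑ s ∈ (triples V).filter (fun s => (edgesIn G.edgeFinset s).card = 3),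
    (edgesIn G.edgeFinset s ∩ F).card

/-- `T₂(F)`: pairs `(T, {e,f})` with `T` a triangle of `G` and `{e,f}` a pair of
distinct edges of `T` both in `F`. -/
def T2count [Fintype V] (G : SimpleGraph V) (F : Finset (Sym2 V)) : ℕ :=
  ∑ s ∈ (triples V).filter (fun s => (edgesIn G.edgeFinset s).card = 3),
    Nat.choose (edgesIn G.edgeFinset s ∩ F).card 2

/-- The unbiased estimators of the 3-profile. -/
def Xest [Fintype V] (p : ℝ) (i : ℕ) (F : Finset (Sym2 V)) : ℝ :=
  match i with
  | 0 => (Ycount F 0 : ℝ) - (1 - p) * Ycount F 1 / p + (1 - p) ^ 2 * Ycount F 2 / p ^ 2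
           - (1 - p) ^ 3 * Ycount F 3 / p ^ 3
  | 1 => (Ycount F 1 : ℝ) / p - 2 * (1 - p) * Ycount F 2 / p ^ 2
           + 3 * (1 - p) ^ 2 * Ycount F 3 / p ^ 3
  | 2 => (Ycount F 2 : ℝ) / p ^ 2 - 3 * (1 - p) * Ycount F 3 / p ^ 3
  | 3 => (Ycount F 3 : ℝ) / p ^ 3
  | _ => 0

end ThreeProfile

namespace Finset

lemma subset_iff_card_inter_eq {α : Type*} [DecidableEq α] {A F : Finset α} :
    A ⊆ F ↔ #(F ∩ A) = #A := by
  rw [← inter_eq_right, ← eq_iff_card_le_of_subset inter_subset_right]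
  exact ⟨fun h => (card_le_card inter_subset_right).antisymm h, fun h => h.ge⟩

lemma exists_mem_eq_singleton_iff {α : Type*} [DecidableEq α] {A F : Finset α} :
    (∃ e ∈ F, A = {e}) ↔ #A = 1 ∧ #(F ∩ A) = 1 := by
  constructor
  · rintro ⟨e, he, rfl⟩
    simp [inter_singleton_of_mem he]
  · rintro ⟨hA, hFA⟩
    obtain ⟨e, rfl⟩ := card_eq_one.1 hA
    exact ⟨e, singleton_subset_iff.1 (subset_iff_card_inter_eq.2 (hFA.trans hA.symm)), rfl⟩

-- Bernoulli sampling on `E`, restricted to `A ⊆ E`, is Bernoulli sampling on `A`.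
lemma sum_powerset_mul_inter {α : Type*} [DecidableEq α] (p : ℝ) (g : Finset α → ℝ)
    {A E : Finset α} (hAE : A ⊆ E) :
    ∑ F ∈ E.powerset, p ^ #F * (1 - p) ^ (#E - #F) * g (F ∩ A) =
      ∑ B ∈ A.powerset, p ^ #B * (1 - p) ^ (#A - #B) * g B := by
  obtain ⟨C, rfl, hAC⟩ : ∃ C, E = A ∪ C ∧ Disjoint A C :=
    ⟨E \ A, (union_sdiff_of_subset hAE).symm, disjoint_sdiff⟩
  clear hAE
  induction C using Finset.induction_on with
  | empty =>
    rw [union_empty]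
    exact sum_congr rfl fun B hB => by rw [inter_eq_left.2 (mem_powerset.1 hB)]
  | insert a C haC ih =>
    have haA : a ∉ A := disjoint_left.1 hAC.symm (mem_insert_self a C)
    have haAC : a ∉ A ∪ C := by simp [haA, haC]
    rw [union_insert, sum_powerset_insert haAC, ← ih (hAC.mono_right (subset_insert a C)),
      ← sum_add_distrib]
    refine sum_congr rfl fun F hF => ?_
    have hFA : #F ≤ #(A ∪ C) := card_le_card (mem_powerset.1 hF)
    have haF : a ∉ F := fun h => haAC (mem_powerset.1 hF h)
    rw [insert_inter_of_notMem haA, card_insert_of_notMem haAC, card_insert_of_notMem haF,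
      Nat.add_sub_add_right, Nat.sub_add_comm hFA]
    ring

lemma abs_sum_mul_sub_le {ι : Type*} (s : Finset ι) {a b : ι → ℝ} (c : ι → ℝ) {ε : ℝ}
    (h : ∀ i ∈ s, |a i - b i| ≤ ε * b i) :
    |∑ i ∈ s, c i * (a i - b i)| ≤ ε * ∑ i ∈ s, |c i| * b i := by
  rw [mul_sum]
  refine (abs_sum_le_sum_abs _ _).trans (sum_le_sum fun i hi => ?_)
  rw [abs_mul, mul_left_comm]
  exact mul_le_mul_of_nonneg_left (h i hi) (abs_nonneg _)

end Finset

namespace ThreeProfile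

variable {V : Type*}

lemma card_edgesIn_le_choose_two (G : SimpleGraph V) [Fintype G.edgeSet] (s : Finset V) :
    #(edgesIn G.edgeFinset s) ≤ (#s).choose 2 := by
  have hsub : edgesIn G.edgeFinset s ⊆ s.sym2 \ s.image Sym2.diag := by
    intro e he
    simp only [edgesIn, mem_filter, SimpleGraph.mem_edgeFinset] at he
    refine mem_sdiff.2 ⟨mem_sym2_iff.2 he.2, ?_⟩
    intro hmem
    obtain ⟨a, -, rfl⟩ := mem_image.1 hmem
    exact G.not_isDiag_of_mem_edgeSet he.1 (Sym2.diag_isDiag a)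
  have hdiag : s.image Sym2.diag ⊆ s.sym2 := by
    intro e he
    obtain ⟨a, ha, rfl⟩ := mem_image.1 he
    exact mk_mem_sym2_iff.2 ⟨ha, ha⟩
  calc #(edgesIn G.edgeFinset s) ≤ #(s.sym2 \ s.image Sym2.diag) := card_le_card hsub
    _ = (#s).choose 2 := by
      rw [card_sdiff_of_subset hdiag, card_sym2, card_image_of_injective _ Sym2.diag_injective,
        Nat.choose_succ_succ, Nat.choose_one_right, Nat.add_sub_cancel_left]

lemma edgesIn_eq_inter {F E : Finset (Sym2 V)} (hF : F ⊆ E) (s : Finset V) :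
    edgesIn F s = F ∩ edgesIn E s := by
  ext e
  simp only [edgesIn, mem_filter, mem_inter]
  exact ⟨fun ⟨he, hs⟩ => ⟨he, hF he, hs⟩, fun ⟨he, _, hs⟩ => ⟨he, hs⟩⟩

lemma edgesIn_subset (E : Finset (Sym2 V)) (s : Finset V) : edgesIn E s ⊆ E :=
  filter_subset _ _

section

variable [Fintype V] (G : SimpleGraph V)

def tripleSum (g : ℕ → ℕ → ℝ) (F : Finset (Sym2 V)) : ℝ :=
  ∑ s ∈ triples V, g #(edgesIn G.edgeFinset s) #(F ∩ edgesIn G.edgeFinset s)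

lemma card_edgesIn_le_three {s : Finset V} (hs : s ∈ triples V) :
    #(edgesIn G.edgeFinset s) ≤ 3 := by
  simpa [(mem_powersetCard.1 hs).2] using card_edgesIn_le_choose_two G s

lemma tripleSum_congr {g g' : ℕ → ℕ → ℝ} (h : ∀ k ≤ 3, ∀ j ≤ k, g k j = g' k j)
    (F : Finset (Sym2 V)) : tripleSum G g F = tripleSum G g' F :=
  sum_congr rfl fun _ hs =>
    h _ (card_edgesIn_le_three G hs) _ (card_le_card inter_subset_right)

lemma tripleSum_add (g g' : ℕ → ℕ → ℝ) (F : Finset (Sym2 V)) :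
    tripleSum G g F + tripleSum G g' F = tripleSum G (fun k j => g k j + g' k j) F :=
  sum_add_distrib.symm

lemma tripleSum_sub (g g' : ℕ → ℕ → ℝ) (F : Finset (Sym2 V)) :
    tripleSum G g F - tripleSum G g' F = tripleSum G (fun k j => g k j - g' k j) F :=
  (sum_sub_distrib ..).symm

lemma mul_tripleSum (c : ℝ) (g : ℕ → ℕ → ℝ) (F : Finset (Sym2 V)) :
    c * tripleSum G g F = tripleSum G (fun k j => c * g k j) F :=
  mul_sum _ _ _

lemma expVal_tripleSum (p : ℝ) (g : ℕ → ℕ → ℝ) :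
    expVal G p (tripleSum G g) = ∑ k ∈ range 4, (Ycount G.edgeFinset k : ℝ) *
      ∑ j ∈ range (k + 1), (k.choose j : ℝ) * p ^ j * (1 - p) ^ (k - j) * g k j := by
  set binomialMean : ℕ → ℝ :=
    fun k => ∑ j ∈ range (k + 1), (k.choose j : ℝ) * p ^ j * (1 - p) ^ (k - j) * g k j
  have hlocal : ∀ s, ∑ F ∈ G.edgeFinset.powerset, p ^ #F * (1 - p) ^ (#G.edgeFinset - #F) *
      g #(edgesIn G.edgeFinset s) #(F ∩ edgesIn G.edgeFinset s) =
        binomialMean #(edgesIn G.edgeFinset s) := by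
    intro s
    set A := edgesIn G.edgeFinset s
    rw [sum_powerset_mul_inter p (fun B => g #A #B) (edgesIn_subset _ s),
      sum_powerset_apply_card (fun j => p ^ j * (1 - p) ^ (#A - j) * g #A j)]
    simp only [binomialMean, nsmul_eq_mul, mul_assoc]
    rfl
  have hmaps : ∀ s ∈ triples V, #(edgesIn G.edgeFinset s) ∈ range 4 :=
    fun s hs => mem_range.2 (Nat.lt_succ_of_le (card_edgesIn_le_three G hs))
  simp only [expVal, tripleSum, mul_sum]
  rw [sum_comm]
  simp only [← mul_sum, hlocal]
  rw [← sum_fiberwise_of_maps_to' hmaps]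
  simp only [Ycount, sum_const, nsmul_eq_mul]
  rfl

lemma Ycount_eq_tripleSum {F : Finset (Sym2 V)} (hF : F ⊆ G.edgeFinset) (i : ℕ) :
    (Ycount F i : ℝ) = tripleSum G (fun _ j => if j = i then 1 else 0) F := by
  simp only [Ycount, card_filter, tripleSum, edgesIn_eq_inter hF, Nat.cast_sum, Nat.cast_ite,
    Nat.cast_one, Nat.cast_zero]

lemma S1count_eq_tripleSum (F : Finset (Sym2 V)) :
    (S1count G F : ℝ) = tripleSum G (fun k j => if k = 1 ∧ j = 1 then 1 else 0) F := by
  simp only [S1count, card_filter, tripleSum, exists_mem_eq_singleton_iff, Nat.cast_sum,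
    Nat.cast_ite, Nat.cast_one, Nat.cast_zero]

lemma D1count_eq_tripleSum (F : Finset (Sym2 V)) :
    (D1count G F : ℝ) = tripleSum G (fun k j => if k = 2 then (j : ℝ) else 0) F := by
  simp only [D1count, tripleSum, sum_filter, inter_comm, Nat.cast_sum, Nat.cast_ite,
    Nat.cast_zero]

lemma D2count_eq_tripleSum (F : Finset (Sym2 V)) :
    (D2count G F : ℝ) = tripleSum G (fun k j => if k = 2 ∧ j = 2 then 1 else 0) F := by
  simp only [D2count, card_filter, tripleSum, subset_iff_card_inter_eq, Nat.cast_sum,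
    Nat.cast_ite, Nat.cast_one, Nat.cast_zero]
  refine sum_congr rfl fun _ _ => if_congr ?_ rfl rfl
  exact and_congr_right fun h => by rw [h]

lemma T1count_eq_tripleSum (F : Finset (Sym2 V)) :
    (T1count G F : ℝ) = tripleSum G (fun k j => if k = 3 then (j : ℝ) else 0) F := by
  simp only [T1count, tripleSum, sum_filter, inter_comm, Nat.cast_sum, Nat.cast_ite,
    Nat.cast_zero]

lemma T2count_eq_tripleSum (F : Finset (Sym2 V)) :
    (T2count G F : ℝ) = tripleSum G (fun k j => if k = 3 then (j.choose 2 : ℝ) else 0) F := by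
  simp only [T2count, tripleSum, sum_filter, inter_comm, Nat.cast_sum, Nat.cast_ite,
    Nat.cast_zero]

lemma Ycount_two_eq {F : Finset (Sym2 V)} (hF : F ⊆ G.edgeFinset) :
    (Ycount F 2 : ℝ) = D2count G F + T2count G F - 3 * Ycount F 3 := by
  simp only [Ycount_eq_tripleSum G hF, D2count_eq_tripleSum, T2count_eq_tripleSum,
    mul_tripleSum, tripleSum_add, tripleSum_sub]
  refine tripleSum_congr G (fun k hk j hj => ?_) F
  interval_cases k <;> interval_cases j <;> norm_num

lemma Ycount_one_eq {F : Finset (Sym2 V)} (hF : F ⊆ G.edgeFinset) :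
    (Ycount F 1 : ℝ) = S1count G F + D1count G F + T1count G F
      - 2 * (D2count G F + T2count G F) + 3 * Ycount F 3 := by
  simp only [Ycount_eq_tripleSum G hF, S1count_eq_tripleSum, D1count_eq_tripleSum,
    T1count_eq_tripleSum, D2count_eq_tripleSum, T2count_eq_tripleSum,
    mul_tripleSum, tripleSum_add, tripleSum_sub]
  refine tripleSum_congr G (fun k hk j hj => ?_) F
  interval_cases k <;> interval_cases j <;> norm_num

lemma expVal_congr (p : ℝ) {f f' : Finset (Sym2 V) → ℝ}
    (h : ∀ F ⊆ G.edgeFinset, f F = f' F) :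
    expVal G p f = expVal G p f' :=
  sum_congr rfl fun F hF => by rw [h F (mem_powerset.1 hF)]

lemma expVal_Ycount_zero (p : ℝ) :
    expVal G p (fun F => (Ycount F 0 : ℝ)) = Ycount G.edgeFinset 0
      + (1 - p) * Ycount G.edgeFinset 1 + (1 - p) ^ 2 * Ycount G.edgeFinset 2
      + (1 - p) ^ 3 * Ycount G.edgeFinset 3 := by
  rw [expVal_congr G p fun F hF => Ycount_eq_tripleSum G hF 0, expVal_tripleSum]
  simp [sum_range_succ]
  ring

lemma expVal_Ycount_three (p : ℝ) :
    expVal G p (fun F => (Ycount F 3 : ℝ)) = p ^ 3 * Ycount G.edgeFinset 3 := by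
  rw [expVal_congr G p fun F hF => Ycount_eq_tripleSum G hF 3, expVal_tripleSum]
  simp [sum_range_succ]
  ring

lemma expVal_S1count (p : ℝ) :
    expVal G p (fun F => (S1count G F : ℝ)) = p * Ycount G.edgeFinset 1 := by
  simp only [S1count_eq_tripleSum, expVal_tripleSum]
  simp [sum_range_succ]
  ring

lemma expVal_D1count (p : ℝ) :
    expVal G p (fun F => (D1count G F : ℝ)) = 2 * p * Ycount G.edgeFinset 2 := by
  simp only [D1count_eq_tripleSum, expVal_tripleSum]
  simp [sum_range_succ]
  ring

lemma expVal_T1count (p : ℝ) :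
    expVal G p (fun F => (T1count G F : ℝ)) = 3 * p * Ycount G.edgeFinset 3 := by
  simp only [T1count_eq_tripleSum, expVal_tripleSum]
  simp [sum_range_succ]
  ring

lemma expVal_D2count (p : ℝ) :
    expVal G p (fun F => (D2count G F : ℝ)) = p ^ 2 * Ycount G.edgeFinset 2 := by
  simp only [D2count_eq_tripleSum, expVal_tripleSum]
  simp [sum_range_succ]
  ring

lemma expVal_T2count (p : ℝ) :
    expVal G p (fun F => (T2count G F : ℝ)) = 3 * p ^ 2 * Ycount G.edgeFinset 3 := by
  simp only [T2count_eq_tripleSum, expVal_tripleSum]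
  simp [sum_range_succ]
  ring

lemma Xest_zero_eq {p : ℝ} (hp : p ≠ 0) {F : Finset (Sym2 V)} (hF : F ⊆ G.edgeFinset) :
    Xest p 0 F = Ycount F 0 - (1 / p - 1) * (S1count G F + D1count G F + T1count G F)
      + (1 / p ^ 2 - 1) * (D2count G F + T2count G F) - (1 / p ^ 3 - 1) * Ycount F 3 := by
  rw [Xest, Ycount_one_eq G hF, Ycount_two_eq G hF]
  field_simp
  ring

end

theorem X0_deviation {V : Type*} [Fintype V] (G : SimpleGraph V)
    (p : ℝ) (hp : 0 < p) (hp1 : p ≤ 1) (ε : ℝ) (hε : 0 ≤ ε)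
    (F : Finset (Sym2 V)) (hF : F ⊆ G.edgeFinset) (n : ℕ → ℕ)
    (hn : ∀ i, n i = Ycount G.edgeFinset i)
    (hY0 : |(Ycount F 0 : ℝ) - expVal G p (fun F' => (Ycount F' 0 : ℝ))|
      ≤ ε * expVal G p (fun F' => (Ycount F' 0 : ℝ)))
    (hS1 : |(S1count G F : ℝ) - expVal G p (fun F' => (S1count G F' : ℝ))|
      ≤ ε * expVal G p (fun F' => (S1count G F' : ℝ)))
    (hD1 : |(D1count G F : ℝ) - expVal G p (fun F' => (D1count G F' : ℝ))|
      ≤ ε * expVal G p (fun F' => (D1count G F' : ℝ)))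
    (hT1 : |(T1count G F : ℝ) - expVal G p (fun F' => (T1count G F' : ℝ))|
      ≤ ε * expVal G p (fun F' => (T1count G F' : ℝ)))
    (hD2 : |(D2count G F : ℝ) - expVal G p (fun F' => (D2count G F' : ℝ))|
      ≤ ε * expVal G p (fun F' => (D2count G F' : ℝ)))
    (hT2 : |(T2count G F : ℝ) - expVal G p (fun F' => (T2count G F' : ℝ))|
      ≤ ε * expVal G p (fun F' => (T2count G F' : ℝ)))
    (hY3 : |(Ycount F 3 : ℝ) - expVal G p (fun F' => (Ycount F' 3 : ℝ))|
      ≤ ε * expVal G p (fun F' => (Ycount F' 3 : ℝ))) :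
    |Xest p 0 F - n 0| ≤ ε * (n 0 + 2 * n 1 + 4 * n 2 + 8 * n 3) ∧
    |Xest p 0 F - n 0| ≤ 8 * ε * (n 0 + n 1 + n 2 + n 3) := by
  have hc : ∀ k : ℕ, 0 ≤ 1 / p ^ k - 1 :=
    fun k => sub_nonneg.2 (one_le_one_div (pow_pos hp k) (pow_le_one₀ hp.le hp1))
  let stat : Fin 7 → Finset (Sym2 V) → ℝ := ![fun F => Ycount F 0, fun F => S1count G F,
    fun F => D1count G F, fun F => T1count G F, fun F => D2count G F, fun F => T2count G F,
    fun F => Ycount F 3]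
  have hdev := abs_sum_mul_sub_le univ
    ![1, -(1 / p - 1), -(1 / p - 1), -(1 / p - 1), 1 / p ^ 2 - 1, 1 / p ^ 2 - 1, -(1 / p ^ 3 - 1)]
    (a := fun i => stat i F) (b := fun i => expVal G p (stat i))
    (by intro i _; fin_cases i <;> assumption)
  simp only [stat, Fin.sum_univ_seven, Matrix.cons_val, abs_one, abs_neg,
    abs_of_nonneg (pow_one p ▸ hc 1), abs_of_nonneg (hc 2), abs_of_nonneg (hc 3),
    expVal_Ycount_zero, expVal_S1count, expVal_D1count, expVal_T1count, expVal_D2count,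
    expVal_T2count, expVal_Ycount_three, ← hn] at hdev
  have hbound : |Xest p 0 F - n 0| ≤
      ε * (n 0 + 2 * (1 - p) * n 1 + 4 * (1 - p) * n 2 + (8 - 6 * p - 2 * p ^ 3) * n 3) := by
    convert hdev using 2
    · rw [Xest_zero_eq G hp.ne' hF]
      field_simp
      ring
    · field_simp
      ring
  have hN : ∀ i, (0 : ℝ) ≤ n i := fun i => Nat.cast_nonneg _
  have hfirst : |Xest p 0 F - n 0| ≤ ε * (n 0 + 2 * n 1 + 4 * n 2 + 8 * n 3) :=
    hbound.trans <| mul_le_mul_of_nonneg_left (by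
      nlinarith [mul_nonneg hp.le (hN 1), mul_nonneg hp.le (hN 2), mul_nonneg hp.le (hN 3),
        mul_nonneg (pow_nonneg hp.le 3) (hN 3)]) hε
  refine ⟨hfirst, hfirst.trans ?_⟩
  nlinarith [mul_nonneg hε (hN 0), mul_nonneg hε (hN 1), mul_nonneg hε (hN 2)]

end ThreeProfile
end
end
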